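/- Let f : [0,1] → [0,∞) be continuous and nondecreasing with f(1) > 1/2. Then f satisfies the integral equation f(r)² = 1/4 + r f(r) − ∫₀ʳ f(u) du + (1/4 + f(1)/2 − ∫₀¹ f(s) ds)·r² for all r ∈ [0,1] if and only if f is continuously differentiable and satisfies f(0) = 1/2 and f'(r) = c r/(f(r) − r/2) on [0,1], where c = 1/4 + f(1)/2 − ∫₀¹ f(s) ds; and in that case c > 0. -/

import Mathlib

open Set intervalIntegral MeasureTheory

/-! Substituting `g(r) = f(r) - r/2` turns the integral equation into
`g(r)² = 1/4 + (c + 1/4) r² - ∫₀ʳ f`. At `r = 0` this forces `f(0) = 1/2`, and monotonicity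
then keeps `g` positive, so `g` is the square root of a differentiable function; differentiating
gives `2 g g' = 2 (c + 1/4) r - f`, which is the differential equation. Conversely, under the
differential equation the difference of the two sides has zero derivative and vanishes at `0`.
At `r = 1` the equation reads `f(1)² = f(1)/2 + 2c`, whence `c > 0`. -/

theorem eq_left_of_hasDerivWithinAt_zero {F : ℝ → ℝ} {a b : ℝ}
    (hF : ∀ x ∈ Icc a b, HasDerivWithinAt F 0 (Icc a b) x) :
    ∀ x ∈ Icc a b, F x = F a := by
  intro x hx
  have h := (convex_Icc a b).norm_image_sub_le_of_norm_hasDerivWithin_le (f' := fun _ => 0)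
    (C := 0) hF (fun _ _ => norm_zero.le) (left_mem_Icc.2 (hx.1.trans hx.2)) hx
  simpa [sub_eq_zero] using h

theorem ContinuousOn.hasDerivWithinAt_integral_Icc {f : ℝ → ℝ} {a b r : ℝ}
    (hf : ContinuousOn f (Icc a b)) (hr : r ∈ Icc a b) :
    HasDerivWithinAt (fun t => ∫ u in a..t, f u) (f r) (Icc a b) r := by
  have : Fact (r ∈ Icc a b) := ⟨hr⟩
  refine integral_hasDerivWithinAt_right ?_
    (hf.stronglyMeasurableAtFilter_nhdsWithin measurableSet_Icc r) (hf r hr)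
  exact (hf.mono (Icc_subset_Icc le_rfl hr.2)).intervalIntegrable_of_Icc hr.1

theorem HasDerivWithinAt.of_sq_eq {g φ : ℝ → ℝ} {s : Set ℝ} {r φ' : ℝ}
    (hg : ∀ t ∈ s, 0 ≤ g t) (hsq : ∀ t ∈ s, g t ^ 2 = φ t) (hr : r ∈ s) (hgr : 0 < g r)
    (hφ : HasDerivWithinAt φ φ' s r) :
    HasDerivWithinAt g (φ' / (2 * g r)) s r := by
  have hsqrt : ∀ t ∈ s, Real.sqrt (φ t) = g t := fun t ht => by
    rw [← hsq t ht, Real.sqrt_sq (hg t ht)]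
  have hφr : φ r ≠ 0 := by rw [← hsq r hr]; positivity
  have h := (Real.hasDerivAt_sqrt hφr).comp_hasDerivWithinAt r hφ
  rw [hsqrt r hr] at h
  exact (h.congr (fun t ht => (hsqrt t ht).symm) (hsqrt r hr).symm).congr_deriv (by ring)

section IntegralEquation

variable {f : ℝ → ℝ} {c : ℝ}

/-- The value of `(f t - t/2)²` prescribed by the integral equation with constant `c`. -/
noncomputable def shiftedSquare (c : ℝ) (f : ℝ → ℝ) (t : ℝ) : ℝ :=
  1/4 + (c + 1/4) * t ^ 2 - ∫ u in (0:ℝ)..t, f u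

theorem integralEq_iff_sq_eq_shiftedSquare (r : ℝ) :
    f r ^ 2 = 1/4 + r * f r - (∫ u in (0:ℝ)..r, f u) + c * r ^ 2 ↔
      (f r - r/2) ^ 2 = shiftedSquare c f r := by
  unfold shiftedSquare
  constructor <;> intro h <;> linarith

theorem hasDerivWithinAt_shiftedSquare (hf : ContinuousOn f (Icc 0 1)) {r : ℝ}
    (hr : r ∈ Icc (0:ℝ) 1) :
    HasDerivWithinAt (shiftedSquare c f) (2 * (c + 1/4) * r - f r) (Icc 0 1) r := by
  have hpoly := ((hasDerivAt_pow 2 r).const_mul (c + 1/4)).const_add (1/4 : ℝ)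
  refine (hpoly.hasDerivWithinAt.sub (hf.hasDerivWithinAt_integral_Icc hr)).congr_deriv ?_
  push_cast
  ring

theorem half_lt_of_monotoneOn (hmono : MonotoneOn f (Icc 0 1)) (h0 : f 0 = 1/2)
    (h1 : 1/2 < f 1) : ∀ r ∈ Icc (0:ℝ) 1, r / 2 < f r := by
  intro r hr
  rcases hr.2.eq_or_lt with rfl | hlt
  · linarith
  · have := hmono (left_mem_Icc.2 zero_le_one) hr hr.1
    linarith

theorem hasDerivWithinAt_of_integralEq (hf : ContinuousOn f (Icc 0 1))
    (hpos : ∀ r ∈ Icc (0:ℝ) 1, r / 2 < f r)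
    (H : ∀ r ∈ Icc (0:ℝ) 1, f r ^ 2 = 1/4 + r * f r - (∫ u in (0:ℝ)..r, f u) + c * r ^ 2) :
    ∀ r ∈ Icc (0:ℝ) 1, HasDerivWithinAt f (c * r / (f r - r/2)) (Icc 0 1) r := by
  intro r hr
  have hg : HasDerivWithinAt (fun t => f t - t/2)
      ((2 * (c + 1/4) * r - f r) / (2 * (f r - r/2))) (Icc 0 1) r :=
    .of_sq_eq (fun t ht => (sub_pos.2 (hpos t ht)).le)
      (fun t ht => (integralEq_iff_sq_eq_shiftedSquare t).1 (H t ht)) hr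
      (sub_pos.2 (hpos r hr)) (hasDerivWithinAt_shiftedSquare hf hr)
  have hne : f r - r/2 ≠ 0 := (sub_pos.2 (hpos r hr)).ne'
  have hf' := hg.add ((hasDerivWithinAt_id r (Icc 0 1)).div_const 2)
  refine (hf'.congr_deriv ?_).congr_of_mem (fun t _ => by simp only [Pi.add_apply, id]; ring) hr
  rw [div_add' _ _ _ (mul_ne_zero two_ne_zero hne), div_eq_div_iff (mul_ne_zero two_ne_zero hne) hne]
  ring

theorem integralEq_of_hasDerivWithinAt (hf : ContinuousOn f (Icc 0 1))
    (hne : ∀ r ∈ Icc (0:ℝ) 1, f r - r/2 ≠ 0) (h0 : f 0 = 1/2)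
    (hd : ∀ r ∈ Icc (0:ℝ) 1, HasDerivWithinAt f (c * r / (f r - r/2)) (Icc 0 1) r) :
    ∀ r ∈ Icc (0:ℝ) 1, f r ^ 2 = 1/4 + r * f r - (∫ u in (0:ℝ)..r, f u) + c * r ^ 2 := by
  have hderiv : ∀ r ∈ Icc (0:ℝ) 1, HasDerivWithinAt
      (fun t => (f t - t/2) ^ 2 - shiftedSquare c f t) 0 (Icc 0 1) r := by
    intro r hr
    have hg : HasDerivWithinAt (fun t => f t - t/2) (c * r / (f r - r/2) - 1/2) (Icc 0 1) r :=
      (hd r hr).sub ((hasDerivWithinAt_id r (Icc 0 1)).div_const 2)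
    refine ((hg.pow 2).sub (hasDerivWithinAt_shiftedSquare hf hr)).congr_deriv ?_
    have hcancel : (f r - r/2) * (c * r / (f r - r/2)) = c * r := mul_div_cancel₀ _ (hne r hr)
    simp only [Nat.cast_ofNat, Nat.add_one_sub_one, pow_one]
    linear_combination 2 * hcancel
  intro r hr
  have h := eq_left_of_hasDerivWithinAt_zero hderiv r hr
  simp only [shiftedSquare, h0, integral_same] at h
  rw [integralEq_iff_sq_eq_shiftedSquare, shiftedSquare]
  linarith

end IntegralEquation

theorem stmt14 (f : ℝ → ℝ)
    (hf : ContinuousOn f (Set.Icc 0 1))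
    (hmono : MonotoneOn f (Set.Icc 0 1))
    (hnonneg : ∀ r ∈ Set.Icc (0:ℝ) 1, 0 ≤ f r)
    (hf1 : 1/2 < f 1) :
    ((∀ r ∈ Set.Icc (0:ℝ) 1,
        (f r)^2 = 1/4 + r * f r - (∫ u in (0:ℝ)..r, f u)
          + (1/4 + f 1 / 2 - ∫ s in (0:ℝ)..1, f s) * r^2)
      ↔ (f 0 = 1/2 ∧ ∀ r ∈ Set.Icc (0:ℝ) 1,
          HasDerivWithinAt f
            ((1/4 + f 1 / 2 - ∫ s in (0:ℝ)..1, f s) * r / (f r - r/2))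
            (Set.Icc 0 1) r))
    ∧ ((∀ r ∈ Set.Icc (0:ℝ) 1,
        (f r)^2 = 1/4 + r * f r - (∫ u in (0:ℝ)..r, f u)
          + (1/4 + f 1 / 2 - ∫ s in (0:ℝ)..1, f s) * r^2)
        → 0 < 1/4 + f 1 / 2 - ∫ s in (0:ℝ)..1, f s) := by
  have hmem0 : (0:ℝ) ∈ Icc (0:ℝ) 1 := left_mem_Icc.2 zero_le_one
  refine ⟨⟨fun H => ?_, fun ⟨h0, hd⟩ => ?_⟩, fun H => ?_⟩
  · have h0 : f 0 = 1/2 := by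
      have hsq := H 0 hmem0
      simp only [integral_same] at hsq
      nlinarith [hnonneg 0 hmem0]
    exact ⟨h0, hasDerivWithinAt_of_integralEq hf (half_lt_of_monotoneOn hmono h0 hf1) H⟩
  · exact integralEq_of_hasDerivWithinAt hf
      (fun r hr => (sub_pos.2 (half_lt_of_monotoneOn hmono h0 hf1 r hr)).ne') h0 hd
  · nlinarith [H 1 (right_mem_Icc.2 zero_le_one)]
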